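/- Let Γ be a group, M : ℕ, n : Fin M → ℕ with n l ≥ 1 for all l, and for each l : Fin M let σ l : Γ → Γ → ZMod (n l) satisfy the 2-cocycle identity σ l g₁ g₂ + σ l (g₁ * g₂) g₃ = σ l g₂ g₃ + σ l g₁ (g₂ * g₃) for all g₁ g₂ g₃ : Γ. Let H := Π l : Fin M, ZMod (n l) (an additive group) and give Γ × H the product group structure. Define ω : (Γ × H) → (Γ × H) → (Γ × H) → ℂ by ω x y z := Π l : Fin M, Complex.exp (2 * π * Complex.I * (((x.2 l) * (σ l y.1 z.1)).val : ℂ) / (n l)). Then ω satisfies the multiplicative 3-cocycle identity: for all x₁ x₂ x₃ x₄ : Γ × H, ω x₂ x₃ x₄ * ω x₁ (x₂ * x₃) x₄ * ω x₁ x₂ x₃ = ω (x₁ * x₂) x₃ x₄ * ω x₁ x₂ (x₃ * x₄). -/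

import Mathlib

noncomputable section

/-- The anomaly 3-cocycle `ω x y z = ∏_l exp(2πi (x.2 l) σ_l(y.1, z.1) / n_l)`
of the symmetry category obtained by enhancing an on-site symmetry group `Γ` by
the group `H = Π_l ℤ/n_l` of SPT-stacking operations, where the SPT phases are
classified by 2-cocycles `σ_l`.  Here `H` is the additive group
`Π l, ZMod (n l)`, rendered multiplicatively via `Multiplicative` so that
`Γ × H` carries the product group structure. -/
def anomalyCocycle {Γ : Type*} [Group Γ] {M : ℕ} {n : Fin M → ℕ}
    (σ : ∀ l : Fin M, Γ → Γ → ZMod (n l))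
    (x y z : Γ × (∀ l : Fin M, Multiplicative (ZMod (n l)))) : ℂ :=
  ∏ l : Fin M,
    Complex.exp (2 * Real.pi * Complex.I *
      (((Multiplicative.toAdd (x.2 l)) * σ l y.1 z.1).val : ℂ) / (n l))

open Complex Real in
/-- For `N ≠ 0` this is additivity of `ZMod.toCircle`; for `N = 0` both sides are `1`,
since division by `0` gives `0`. -/
lemma exp_two_pi_I_val_div_add (N : ℕ) (a b : ZMod N) :
    exp (2 * π * I * ((a + b).val : ℂ) / N) =
      exp (2 * π * I * (a.val : ℂ) / N) * exp (2 * π * I * (b.val : ℂ) / N) := by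
  rcases eq_or_ne N 0 with rfl | hN
  · simp
  · have : NeZero N := ⟨hN⟩
    simpa only [ZMod.toCircle_apply, Circle.coe_mul] using
      congrArg ((↑) : Circle → ℂ) (ZMod.toCircle.map_add_eq_mul a b)

/-- This is `δ(h ∪ σ) = δh ∪ σ - h ∪ δσ = 0` for the cup product of a homomorphism `h`
(with `h(x₁ x₂) = h₁ + h₂`) and the 2-cocycle `σ`. -/
lemma cup_twoCocycle_cocycle_identity {Γ R : Type*} [Mul Γ] [CommRing R] (σ : Γ → Γ → R)
    (hσ : ∀ g₁ g₂ g₃, σ g₁ g₂ + σ (g₁ * g₂) g₃ = σ g₂ g₃ + σ g₁ (g₂ * g₃))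
    (h₁ h₂ : R) (g₂ g₃ g₄ : Γ) :
    h₂ * σ g₃ g₄ + h₁ * σ (g₂ * g₃) g₄ + h₁ * σ g₂ g₃ =
      (h₁ + h₂) * σ g₃ g₄ + h₁ * σ g₂ (g₃ * g₄) := by
  linear_combination h₁ * hσ g₂ g₃ g₄

theorem anomalyCocycle_is_3cocycle_general {Γ : Type*} [Group Γ] {M : ℕ}
    {n : Fin M → ℕ}
    (σ : ∀ l : Fin M, Γ → Γ → ZMod (n l))
    (hσ : ∀ (l : Fin M) (g₁ g₂ g₃ : Γ),
      σ l g₁ g₂ + σ l (g₁ * g₂) g₃ = σ l g₂ g₃ + σ l g₁ (g₂ * g₃))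
    (x₁ x₂ x₃ x₄ : Γ × (∀ l : Fin M, Multiplicative (ZMod (n l)))) :
    anomalyCocycle σ x₂ x₃ x₄ * anomalyCocycle σ x₁ (x₂ * x₃) x₄ *
        anomalyCocycle σ x₁ x₂ x₃ =
      anomalyCocycle σ (x₁ * x₂) x₃ x₄ * anomalyCocycle σ x₁ x₂ (x₃ * x₄) := by
  simp only [anomalyCocycle, ← Finset.prod_mul_distrib]
  refine Finset.prod_congr rfl fun l _ => ?_
  simp only [← exp_two_pi_I_val_div_add, Prod.fst_mul, Prod.snd_mul, Pi.mul_apply, toAdd_mul]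
  rw [cup_twoCocycle_cocycle_identity (σ l) (hσ l)]

/-- if each `σ l` satisfies the 2-cocycle identity, then the
anomaly phase `ω` obtained by the Else–Nayak procedure from stacking Γ-SPT
phases satisfies the multiplicative 3-cocycle identity on the product group
`Γ × Π_l ℤ/n_l`. -/
theorem anomalyCocycle_is_3cocycle {Γ : Type*} [Group Γ] {M : ℕ}
    {n : Fin M → ℕ} (hn : ∀ l, 1 ≤ n l)
    (σ : ∀ l : Fin M, Γ → Γ → ZMod (n l))
    (hσ : ∀ (l : Fin M) (g₁ g₂ g₃ : Γ),
      σ l g₁ g₂ + σ l (g₁ * g₂) g₃ = σ l g₂ g₃ + σ l g₁ (g₂ * g₃))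
    (x₁ x₂ x₃ x₄ : Γ × (∀ l : Fin M, Multiplicative (ZMod (n l)))) :
    anomalyCocycle σ x₂ x₃ x₄ * anomalyCocycle σ x₁ (x₂ * x₃) x₄ *
        anomalyCocycle σ x₁ x₂ x₃ =
      anomalyCocycle σ (x₁ * x₂) x₃ x₄ * anomalyCocycle σ x₁ x₂ (x₃ * x₄) :=
  anomalyCocycle_is_3cocycle_general σ hσ x₁ x₂ x₃ x₄

end
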